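/- arXiv:1811.05802 — 3 statements merged into one kernel-verified Lean document; each statement's English description precedes it below -/
import Mathlib

section
/- For every s in the subgroup S(n,∞) of bijections of ℕ fixing 1,...,n, the equality K(s)·P_n = P_n holds, where P_n is the weak operator limit of K(σ_m^n). -/
open MeasureTheory Filter Topology
open scoped InnerProductSpace

/-- The pointwise stabilizer `S(n,∞)` of the first `n` natural numbers inside the full
symmetric group of `ℕ` (all bijections of `ℕ`). -/
def stabSet (n : ℕ) : Set (Equiv.Perm ℕ) := {s | ∀ i < n, s i = i}

/-- `σ_m^n`, the product of the disjoint transpositions `(n+j, n+m+j)` for `j = 0,…,m-1`. -/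
def sigmaPerm (n m : ℕ) : Equiv.Perm ℕ :=
  ((List.range m).map fun j => Equiv.swap (n + j) (n + m + j)).prod

/-! For a finitely supported `t ∈ S(n,∞)` and large `m`, the conjugate `σ_m⁻¹ t σ_m` lies in
`S(n+m,∞)`, because `σ_m` moves `[n, n+m)` past the support of `t`. By continuity
`K(t σ_m) η - K(σ_m) η → 0` in norm, so the weak limits `K(t) P η` and `P η` agree. A general
`s ∈ S(n,∞)` agrees with such a `t` on `[0, k)` for arbitrarily large `k`, i.e. `t⁻¹ s ∈ S(k,∞)`,
and continuity once more gives `K(s) P η = P η`. -/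

lemma stabSet_antitone : Antitone stabSet :=
  fun _ _ hkl _ hs i hi => hs i (hi.trans_le hkl)

lemma prod_range_swap_apply (n m j i : ℕ) (hj : j ≤ m) :
    ((List.range j).map fun l => Equiv.swap (n + l) (n + m + l)).prod i =
      if n ≤ i ∧ i < n + j then i + m else if n + m ≤ i ∧ i < n + m + j then i - m else i := by
  induction j generalizing i with
  | zero =>
    simp only [List.range_zero, List.map_nil, List.prod_nil, Equiv.Perm.one_apply]
    split_ifs <;> omega
  | succ j ih =>
    rw [List.range_succ, List.map_append, List.prod_append, Equiv.Perm.mul_apply]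
    simp only [List.map_cons, List.map_nil, List.prod_cons, List.prod_nil, mul_one,
      Equiv.swap_apply_def]
    split_ifs <;> rw [ih _ (by omega)] <;> split_ifs <;> omega

lemma sigmaPerm_apply_of_lt (n m i : ℕ) (hi : i < n) : sigmaPerm n m i = i := by
  rw [sigmaPerm, prod_range_swap_apply n m m i le_rfl, if_neg (by omega), if_neg (by omega)]

lemma sigmaPerm_apply_of_le_of_lt (n m i : ℕ) (hni : n ≤ i) (him : i < n + m) :
    sigmaPerm n m i = i + m := by
  rw [sigmaPerm, prod_range_swap_apply n m m i le_rfl, if_pos ⟨hni, him⟩]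

lemma eventually_conj_sigmaPerm_mem_stabSet {n : ℕ} {t : Equiv.Perm ℕ} (ht : t ∈ stabSet n)
    (ht_fin : ∀ᶠ i in atTop, t i = i) :
    ∀ᶠ m in atTop, (sigmaPerm n m)⁻¹ * t * sigmaPerm n m ∈ stabSet (n + m) := by
  obtain ⟨N, hN⟩ := eventually_atTop.mp ht_fin
  filter_upwards [eventually_ge_atTop N] with m hm
  intro i hi
  rw [Equiv.Perm.mul_apply, Equiv.Perm.mul_apply, Equiv.Perm.inv_eq_iff_eq]
  rcases lt_or_ge i n with hin | hni
  · rw [sigmaPerm_apply_of_lt n m i hin, ht i hin]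
  · rw [sigmaPerm_apply_of_le_of_lt n m i hni hi]
    exact hN _ (by omega)

lemma exists_eqOn_Iio_eventually_fixed (s : Equiv.Perm ℕ) (k : ℕ) :
    ∃ t : Equiv.Perm ℕ, Set.EqOn t s (Set.Iio k) ∧ ∀ᶠ i in atTop, t i = i := by
  induction k with
  | zero => exact ⟨1, fun _ hi => absurd hi (Nat.not_lt_zero _), by simp⟩
  | succ k ih =>
    obtain ⟨t, hts, ht_fin⟩ := ih
    refine ⟨Equiv.swap (t k) (s k) * t, fun i hi => ?_, ?_⟩
    · rcases lt_or_eq_of_le (Nat.lt_succ_iff.mp hi) with hik | rfl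
      · have hti : t i = s i := hts hik
        rw [Equiv.Perm.mul_apply, hti, Equiv.swap_apply_of_ne_of_ne]
        · exact fun h => hik.ne (t.injective (hti.trans h))
        · exact fun h => hik.ne (s.injective h)
      · simp
    · filter_upwards [ht_fin, eventually_gt_atTop (t k), eventually_gt_atTop (s k)]
        with i hti hit hsi
      rw [Equiv.Perm.mul_apply, hti, Equiv.swap_apply_of_ne_of_ne hit.ne' hsi.ne']

section WeakLimit

variable {𝕜 E : Type*} [RCLike 𝕜] [NormedAddCommGroup E] [InnerProductSpace 𝕜 E]
  {ι : Type*} {l : Filter ι} [l.NeBot]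

lemma eq_of_tendsto_inner_of_tendsto_norm_sub {u v : ι → E} {x y : E}
    (hu : ∀ ζ, Tendsto (fun i => ⟪u i, ζ⟫_𝕜) l (𝓝 ⟪x, ζ⟫_𝕜))
    (hv : ∀ ζ, Tendsto (fun i => ⟪v i, ζ⟫_𝕜) l (𝓝 ⟪y, ζ⟫_𝕜))
    (huv : Tendsto (fun i => ‖u i - v i‖) l (𝓝 0)) : x = y := by
  refine ext_inner_right 𝕜 fun ζ => sub_eq_zero.mp ?_
  have hlim : Tendsto (fun i => ⟪u i - v i, ζ⟫_𝕜) l (𝓝 0) :=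
    squeeze_zero_norm (fun i => norm_inner_le_norm _ _) (by simpa using huv.mul_const ‖ζ‖)
  simp only [inner_sub_left] at hlim
  exact tendsto_nhds_unique ((hu ζ).sub (hv ζ)) hlim

end WeakLimit

section Representation

variable {H : Type*} [NormedAddCommGroup H] [InnerProductSpace ℂ H]
  {K : Equiv.Perm ℕ →* (H →L[ℂ] H)}

lemma inner_apply_left_eq_inner_inv_apply (hunit : ∀ g (η : H), ‖K g η‖ = ‖η‖)
    (g : Equiv.Perm ℕ) (x y : H) : ⟪K g x, y⟫_ℂ = ⟪x, K g⁻¹ y⟫_ℂ := by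
  have hy : K g (K g⁻¹ y) = y := by
    rw [← mul_apply_eq_comp, ← map_mul, mul_inv_cancel, map_one, one_apply_eq_self]
  conv_lhs => rw [← hy]
  exact LinearIsometry.inner_map_map ⟨(K g).toLinearMap, hunit g⟩ x _

lemma norm_apply_sub_apply (hunit : ∀ g (η : H), ‖K g η‖ = ‖η‖) (g : Equiv.Perm ℕ) (x y : H) :
    ‖K g x - K g y‖ = ‖x - y‖ := by
  rw [← map_sub, hunit]

lemma tendsto_norm_apply_sub_self
    (hcont : ∀ (η : H) (ε : ℝ), 0 < ε → ∃ k : ℕ, ∀ s ∈ stabSet k, ‖K s η - η‖ < ε)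
    {c : ℕ → Equiv.Perm ℕ} {f : ℕ → ℕ} (hf : Tendsto f atTop atTop)
    (hc : ∀ᶠ m in atTop, c m ∈ stabSet (f m)) (η : H) :
    Tendsto (fun m => ‖K (c m) η - η‖) atTop (𝓝 0) := by
  rw [Metric.tendsto_nhds]
  intro ε hε
  obtain ⟨k, hk⟩ := hcont η ε hε
  filter_upwards [hc, hf.eventually_ge_atTop k] with m hcm hfm
  simpa using hk _ (stabSet_antitone hfm hcm)

lemma apply_eq_self_of_eventually_fixed (hunit : ∀ g (η : H), ‖K g η‖ = ‖η‖)
    (hcont : ∀ (η : H) (ε : ℝ), 0 < ε → ∃ k : ℕ, ∀ s ∈ stabSet k, ‖K s η - η‖ < ε)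
    {n : ℕ} {P : H →L[ℂ] H}
    (hP : ∀ η ζ : H, Tendsto (fun m => ⟪K (sigmaPerm n m) η, ζ⟫_ℂ) atTop (𝓝 ⟪P η, ζ⟫_ℂ))
    {t : Equiv.Perm ℕ} (ht : t ∈ stabSet n) (ht_fin : ∀ᶠ i in atTop, t i = i) (η : H) :
    K t (P η) = P η := by
  refine eq_of_tendsto_inner_of_tendsto_norm_sub (u := fun m => K t (K (sigmaPerm n m) η))
    (fun ζ => ?_) (hP η) ?_
  · simpa only [inner_apply_left_eq_inner_inv_apply hunit t] using hP η (K t⁻¹ ζ)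
  · have hconj : ∀ m, K t (K (sigmaPerm n m) η) =
        K (sigmaPerm n m) (K ((sigmaPerm n m)⁻¹ * t * sigmaPerm n m) η) := fun m => by
      rw [← mul_apply_eq_comp, ← map_mul, ← mul_apply_eq_comp, ← map_mul]
      group
    simp only [hconj, norm_apply_sub_apply hunit]
    exact tendsto_norm_apply_sub_self hcont (tendsto_atTop_mono (Nat.le_add_left · n) tendsto_id)
      (eventually_conj_sigmaPerm_mem_stabSet ht ht_fin) η

lemma apply_eq_self_of_forall_eventually_fixed (hunit : ∀ g (η : H), ‖K g η‖ = ‖η‖)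
    (hcont : ∀ (η : H) (ε : ℝ), 0 < ε → ∃ k : ℕ, ∀ s ∈ stabSet k, ‖K s η - η‖ < ε)
    {n : ℕ} {ξ : H} (hξ : ∀ t ∈ stabSet n, (∀ᶠ i in atTop, t i = i) → K t ξ = ξ)
    {s : Equiv.Perm ℕ} (hs : s ∈ stabSet n) : K s ξ = ξ := by
  refine eq_of_forall_dist_le fun ε hε => ?_
  obtain ⟨k, hk⟩ := hcont ξ ε hε
  obtain ⟨t, hts, ht_fin⟩ := exists_eqOn_Iio_eventually_fixed s (max k n)
  have ht : t ∈ stabSet n := fun i hi => (hts (lt_max_of_lt_right hi)).trans (hs i hi)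
  have hu : t⁻¹ * s ∈ stabSet k := fun i hi => by
    rw [Equiv.Perm.mul_apply, Equiv.Perm.inv_eq_iff_eq, hts (lt_max_of_lt_left hi)]
  calc dist (K s ξ) ξ = ‖K t (K (t⁻¹ * s) ξ) - K t ξ‖ := by
        rw [dist_eq_norm, hξ t ht ht_fin, ← mul_apply_eq_comp, ← map_mul, mul_inv_cancel_left]
    _ = ‖K (t⁻¹ * s) ξ - ξ‖ := norm_apply_sub_apply hunit _ _ _
    _ ≤ ε := (hk _ hu).le

end Representation

theorem statement3_general
    {H : Type*} [NormedAddCommGroup H] [InnerProductSpace ℂ H]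
    (K : Equiv.Perm ℕ →* (H →L[ℂ] H))
    (hunit : ∀ g (η : H), ‖K g η‖ = ‖η‖)
    (hcont : ∀ (η : H) (ε : ℝ), 0 < ε → ∃ k : ℕ, ∀ s ∈ stabSet k, ‖K s η - η‖ < ε)
    (n : ℕ) (P : H →L[ℂ] H)
    (hP : ∀ η ζ : H, Tendsto (fun m => ⟪K (sigmaPerm n m) η, ζ⟫_ℂ) atTop (𝓝 ⟪P η, ζ⟫_ℂ)) :
    ∀ s ∈ stabSet n, (K s).comp P = P := by
  intro s hs
  ext η
  exact apply_eq_self_of_forall_eventually_fixed hunit hcont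
    (fun t ht ht_fin => apply_eq_self_of_eventually_fixed hunit hcont hP ht ht_fin η) hs

/-- `K(s) ∘ P_n = P_n` for every `s` in the stabilizer `S(n,∞)`,
where `P_n` is the weak operator limit of `K(σ_m^n)`. -/
theorem statement3
    {H : Type*} [NormedAddCommGroup H] [InnerProductSpace ℂ H] [CompleteSpace H]
    (K : Equiv.Perm ℕ →* (H →L[ℂ] H))
    (hunit : ∀ g (η : H), ‖K g η‖ = ‖η‖)
    (hcont : ∀ (η : H) (ε : ℝ), 0 < ε → ∃ k : ℕ, ∀ s ∈ stabSet k, ‖K s η - η‖ < ε)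
    (n : ℕ) (P : H →L[ℂ] H)
    (hP : ∀ η ζ : H, Tendsto (fun m => ⟪K (sigmaPerm n m) η, ζ⟫_ℂ) atTop (𝓝 ⟪P η, ζ⟫_ℂ)) :
    ∀ s ∈ stabSet n, (K s).comp P = P :=
  statement3_general K hunit hcont n P hP
end

section
/- The projections P_n and O_k commute: P_n O_k = O_k P_n, for all n and k. -/
/-!
If `k < n`, the transposition `(k, N)` commutes with `σ_m^n` once `N ≥ n + 2m`, so `O` commutes
with every `K σ_m^n` and hence with their weak limit `P`. If `n ≤ k`, then for large `m`
conjugation by `σ_m^n` moves `(k, N)` to `(k + m, N + m)`, which tends to the identity in the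
topology of pointwise stabilizers; hence `K (k, N) P = P = P K (k, N)` for `N ≥ n`, and letting
`N → ∞` gives `O P = P = P O`.
-/

open MeasureTheory Filter Topology
open scoped InnerProductSpace

theorem list_prod_apply_eq_self {α : Type*} {l : List (Equiv.Perm α)} {x : α}
    (h : ∀ p ∈ l, p x = x) : l.prod x = x :=
  MulAction.mem_stabilizer_iff.mp <| list_prod_mem (S := MulAction.stabilizer _ x) fun p hp =>
    MulAction.mem_stabilizer_iff.mpr (h p hp)

theorem list_prod_map_range_apply {α : Type*} {f : ℕ → Equiv.Perm α} {j m : ℕ} {x : α}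
    (hj : j < m) (hx : ∀ i, j < i → i < m → f i x = x) (hy : ∀ i < j, f i (f j x) = f j x) :
    ((List.range m).map f).prod x = f j x := by
  obtain ⟨r, rfl⟩ : ∃ r, m = j + 1 + r := ⟨m - j - 1, by omega⟩
  rw [List.range_add, List.range_succ, List.map_append, List.map_append, List.prod_append,
    List.prod_append, List.map_singleton, List.prod_singleton, Equiv.Perm.mul_apply,
    Equiv.Perm.mul_apply]
  have hfix : ((List.range r).map (fun i => j + 1 + i) |>.map f).prod x = x := by
    refine list_prod_apply_eq_self ?_
    simp only [List.map_map, List.mem_map, List.mem_range, Function.comp_apply]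
    rintro _ ⟨i, hi, rfl⟩
    exact hx _ (by omega) (by omega)
  rw [hfix]
  exact list_prod_apply_eq_self (by simpa using hy)

theorem sigmaPerm_apply_eq_self {n m x : ℕ} (hx : x < n ∨ n + 2 * m ≤ x) :
    sigmaPerm n m x = x :=
  list_prod_apply_eq_self <| by
    simp only [List.mem_map, List.mem_range]
    rintro _ ⟨j, hj, rfl⟩
    exact Equiv.swap_apply_of_ne_of_ne (by omega) (by omega)

theorem sigmaPerm_apply_of_lt_add {n m x : ℕ} (h₁ : n ≤ x) (h₂ : x < n + m) :
    sigmaPerm n m x = x + m := by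
  have hx : n + (x - n) = x := by omega
  rw [sigmaPerm, list_prod_map_range_apply (j := x - n) (by omega)]
  · simp only [hx, show n + m + (x - n) = x + m by omega, Equiv.swap_apply_left]
  · exact fun i _ _ => Equiv.swap_apply_of_ne_of_ne (by omega) (by omega)
  · simp only [hx, show n + m + (x - n) = x + m by omega, Equiv.swap_apply_left]
    exact fun i _ => Equiv.swap_apply_of_ne_of_ne (by omega) (by omega)

theorem sigmaPerm_apply_add {n m x : ℕ} (h₁ : n ≤ x) (h₂ : x < n + m) :
    sigmaPerm n m (x + m) = x := by
  have hx : n + (x - n) = x := by omega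
  rw [sigmaPerm, list_prod_map_range_apply (j := x - n) (by omega)]
  · simp only [hx, show n + m + (x - n) = x + m by omega, Equiv.swap_apply_right]
  · exact fun i _ _ => Equiv.swap_apply_of_ne_of_ne (by omega) (by omega)
  · simp only [hx, show n + m + (x - n) = x + m by omega, Equiv.swap_apply_right]
    exact fun i _ => Equiv.swap_apply_of_ne_of_ne (by omega) (by omega)

section WeakOperatorTopology

variable {𝕜 D E F G α : Type*} [RCLike 𝕜]
  [NormedAddCommGroup D] [InnerProductSpace 𝕜 D] [NormedAddCommGroup E] [InnerProductSpace 𝕜 E]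
  [NormedAddCommGroup F] [InnerProductSpace 𝕜 F] [NormedAddCommGroup G] [InnerProductSpace 𝕜 G]
  {l : Filter α}

/-- Convergence in the weak operator topology, phrased with inner products as in the hypotheses
(cf. `ContinuousLinearMapWOT.tendsto_iff_forall_inner_apply_tendsto`). -/
def TendstoWOT (A : α → E →L[𝕜] F) (l : Filter α) (O : E →L[𝕜] F) : Prop :=
  ∀ x y, Tendsto (fun a => ⟪A a x, y⟫_𝕜) l (𝓝 ⟪O x, y⟫_𝕜)

theorem tendstoWOT_const (O : E →L[𝕜] F) : TendstoWOT (fun _ => O) l O :=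
  fun _ _ => tendsto_const_nhds

namespace TendstoWOT

variable {A B : α → E →L[𝕜] F} {O O' : E →L[𝕜] F}

theorem unique [l.NeBot] (h : TendstoWOT A l O) (h' : TendstoWOT A l O') : O = O' :=
  ContinuousLinearMap.ext fun x => ext_inner_right 𝕜 fun y => tendsto_nhds_unique (h x y) (h' x y)

theorem congr' (h : TendstoWOT A l O) (hAB : A =ᶠ[l] B) : TendstoWOT B l O :=
  fun x y => (h x y).congr' <| hAB.mono fun a ha => by rw [ha]

theorem comp_right (h : TendstoWOT A l O) (C : D →L[𝕜] E) :
    TendstoWOT (fun a => A a ∘L C) l (O ∘L C) :=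
  fun x y => h (C x) y

theorem comp_left [CompleteSpace F] [CompleteSpace G] (h : TendstoWOT A l O) (B : F →L[𝕜] G) :
    TendstoWOT (fun a => B ∘L A a) l (B ∘L O) :=
  fun x y => by
    simpa only [ContinuousLinearMap.comp_apply, ← ContinuousLinearMap.adjoint_inner_right]
      using h x (ContinuousLinearMap.adjoint B y)

theorem commute [CompleteSpace E] [l.NeBot] {A : α → E →L[𝕜] E} {O B : E →L[𝕜] E}
    (h : TendstoWOT A l O) (hB : ∀ᶠ a in l, Commute B (A a)) : Commute B O :=
  (h.comp_left B).unique <| (h.comp_right B).congr' <| hB.mono fun _ hBA => hBA.eq.symm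

end TendstoWOT

end WeakOperatorTopology

section UnitaryRepresentation

variable {𝕜 H G α : Type*} [RCLike 𝕜] [NormedAddCommGroup H] [InnerProductSpace 𝕜 H] [Group G]
  {K : G →* (H →L[𝕜] H)} {l : Filter α}

theorem map_apply_map_inv_apply (g : G) (y : H) : K g (K g⁻¹ y) = y := by
  rw [← mul_apply_eq_comp, ← map_mul, mul_inv_cancel, map_one, one_apply_eq_self]

theorem inner_map_apply_left (hK : ∀ g x, ‖K g x‖ = ‖x‖) (g : G) (x y : H) :
    ⟪K g x, y⟫_𝕜 = ⟪x, K g⁻¹ y⟫_𝕜 := by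
  conv_lhs => rw [← map_apply_map_inv_apply (K := K) g y]
  exact LinearIsometry.inner_map_map ⟨(K g : H →ₗ[𝕜] H), hK g⟩ x (K g⁻¹ y)

theorem norm_map_inv_apply_sub (hK : ∀ g x, ‖K g x‖ = ‖x‖) (g : G) (y : H) :
    ‖K g⁻¹ y - y‖ = ‖K g y - y‖ := by
  rw [← hK g, map_sub, map_apply_map_inv_apply, norm_sub_rev]

theorem TendstoWOT.map_mul_right (hK : ∀ g x, ‖K g x‖ = ‖x‖) {P : H →L[𝕜] H} {s t : α → G}
    (hs : TendstoWOT (fun a => K (s a)) l P) (ht : ∀ x, Tendsto (fun a => K (t a) x) l (𝓝 x)) :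
    TendstoWOT (fun a => K (s a * t a)) l P := by
  intro x y
  have hbound : Tendsto (fun a => ‖K (t a) x - x‖ * ‖y‖) l (𝓝 0) := by
    simpa using (tendsto_iff_norm_sub_tendsto_zero.mp (ht x)).mul_const ‖y‖
  refine (hs x y).congr_dist (squeeze_zero (fun _ => dist_nonneg) (fun a => ?_) hbound)
  calc dist ⟪K (s a) x, y⟫_𝕜 ⟪K (s a * t a) x, y⟫_𝕜
      = ‖⟪K (s a) (K (t a) x - x), y⟫_𝕜‖ := by
        rw [dist_comm, dist_eq_norm, map_mul, mul_apply_eq_comp, map_sub, inner_sub_left]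
    _ ≤ ‖K (t a) x - x‖ * ‖y‖ := by
        simpa only [hK] using norm_inner_le_norm (𝕜 := 𝕜) (K (s a) (K (t a) x - x)) y

theorem TendstoWOT.map_mul_left (hK : ∀ g x, ‖K g x‖ = ‖x‖) {P : H →L[𝕜] H} {s t : α → G}
    (hs : TendstoWOT (fun a => K (s a)) l P) (ht : ∀ x, Tendsto (fun a => K (t a) x) l (𝓝 x)) :
    TendstoWOT (fun a => K (t a * s a)) l P := by
  intro x y
  have hbound : Tendsto (fun a => ‖x‖ * ‖K (t a) y - y‖) l (𝓝 0) := by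
    simpa using (tendsto_iff_norm_sub_tendsto_zero.mp (ht y)).const_mul ‖x‖
  refine (hs x y).congr_dist (squeeze_zero (fun _ => dist_nonneg) (fun a => ?_) hbound)
  calc dist ⟪K (s a) x, y⟫_𝕜 ⟪K (t a * s a) x, y⟫_𝕜
      = ‖⟪K (s a) x, K (t a)⁻¹ y - y⟫_𝕜‖ := by
        rw [dist_comm, dist_eq_norm, map_mul, mul_apply_eq_comp,
          inner_map_apply_left hK, inner_sub_right]
    _ ≤ ‖x‖ * ‖K (t a) y - y‖ := by
        simpa only [hK, ← map_inv, norm_map_inv_apply_sub hK] using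
          norm_inner_le_norm (𝕜 := 𝕜) (K (s a) x) (K (t a)⁻¹ y - y)

end UnitaryRepresentation

section InfiniteSymmetricGroup

variable {𝕜 H α : Type*} [RCLike 𝕜] [NormedAddCommGroup H] [InnerProductSpace 𝕜 H]
  {K : Equiv.Perm ℕ →* (H →L[𝕜] H)} {l : Filter α}

theorem tendsto_map_apply_of_eventually_mem_stabSet
    (hcont : ∀ (η : H) (ε : ℝ), 0 < ε → ∃ k : ℕ, ∀ s ∈ stabSet k, ‖K s η - η‖ < ε)
    {t : α → Equiv.Perm ℕ} (ht : ∀ L, ∀ᶠ a in l, t a ∈ stabSet L) (x : H) :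
    Tendsto (fun a => K (t a) x) l (𝓝 x) :=
  Metric.tendsto_nhds.mpr fun ε hε => by
    obtain ⟨L, hL⟩ := hcont x ε hε
    filter_upwards [ht L] with a ha using (dist_eq_norm _ _).trans_lt (hL _ ha)

theorem eventually_swap_add_mem_stabSet (i j L : ℕ) :
    ∀ᶠ m in atTop, Equiv.swap (i + m) (j + m) ∈ stabSet L := by
  filter_upwards [eventually_ge_atTop L] with m hm
  exact fun x hx => Equiv.swap_apply_of_ne_of_ne (by omega) (by omega)

variable [CompleteSpace H] {n k : ℕ} {P O : H →L[𝕜] H}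

theorem commute_of_lt (hk : k < n)
    (hP : TendstoWOT (fun m => K (sigmaPerm n m)) atTop P)
    (hO : TendstoWOT (fun N => K (Equiv.swap k N)) atTop O) : Commute O P := by
  refine hP.commute (.of_forall fun m => (hO.commute ?_).symm)
  filter_upwards [eventually_ge_atTop (n + 2 * m)] with N hN
  refine Commute.map ?_ K
  rw [Commute, SemiconjBy, Equiv.mul_swap_eq_swap_mul, sigmaPerm_apply_eq_self (.inl hk),
    sigmaPerm_apply_eq_self (.inr hN)]

theorem commute_of_le (hK : ∀ g x, ‖K g x‖ = ‖x‖)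
    (hcont : ∀ (η : H) (ε : ℝ), 0 < ε → ∃ k : ℕ, ∀ s ∈ stabSet k, ‖K s η - η‖ < ε)
    (hk : n ≤ k) (hP : TendstoWOT (fun m => K (sigmaPerm n m)) atTop P)
    (hO : TendstoWOT (fun N => K (Equiv.swap k N)) atTop O) : Commute P O := by
  have hshift (N : ℕ) : ∀ x, Tendsto (fun m => K (Equiv.swap (k + m) (N + m)) x) atTop (𝓝 x) :=
    tendsto_map_apply_of_eventually_mem_stabSet hcont (eventually_swap_add_mem_stabSet k N)
  have hlarge (N : ℕ) : ∀ᶠ m in atTop, k < n + m ∧ N < n + m := by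
    filter_upwards [eventually_gt_atTop k, eventually_gt_atTop N] with m hkm hNm
    exact ⟨by omega, by omega⟩
  have hswapP {N : ℕ} (hN : n ≤ N) : K (Equiv.swap k N) ∘L P = P := by
    refine (hP.comp_left _).unique ((hP.map_mul_right hK (hshift N)).congr' ?_)
    filter_upwards [hlarge N] with m ⟨hkm, hNm⟩
    rw [Equiv.mul_swap_eq_swap_mul, sigmaPerm_apply_add hk hkm, sigmaPerm_apply_add hN hNm,
      map_mul, ContinuousLinearMap.mul_def]
  have hPswap {N : ℕ} (hN : n ≤ N) : P ∘L K (Equiv.swap k N) = P := by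
    refine (hP.comp_right _).unique ((hP.map_mul_left hK (hshift N)).congr' ?_)
    filter_upwards [hlarge N] with m ⟨hkm, hNm⟩
    rw [← sigmaPerm_apply_of_lt_add hk hkm, ← sigmaPerm_apply_of_lt_add hN hNm,
      ← Equiv.mul_swap_eq_swap_mul, map_mul, ContinuousLinearMap.mul_def]
  have hOP : O ∘L P = P := (hO.comp_right P).unique <| (tendstoWOT_const P).congr' <| by
    filter_upwards [eventually_ge_atTop n] with N hN using (hswapP hN).symm
  have hPO : P ∘L O = P := (hO.comp_left P).unique <| (tendstoWOT_const P).congr' <| by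
    filter_upwards [eventually_ge_atTop n] with N hN using (hPswap hN).symm
  exact hPO.trans hOP.symm

end InfiniteSymmetricGroup

theorem statement6_general
    {H : Type*} [NormedAddCommGroup H] [InnerProductSpace ℂ H] [CompleteSpace H]
    (K : Equiv.Perm ℕ →* (H →L[ℂ] H))
    (hunit : ∀ g (η : H), ‖K g η‖ = ‖η‖)
    (hcont : ∀ (η : H) (ε : ℝ), 0 < ε → ∃ k : ℕ, ∀ s ∈ stabSet k, ‖K s η - η‖ < ε)
    (n k : ℕ) (P O : H →L[ℂ] H)
    (hP : ∀ η ζ : H, Tendsto (fun m => ⟪K (sigmaPerm n m) η, ζ⟫_ℂ) atTop (𝓝 ⟪P η, ζ⟫_ℂ))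
    (hO : ∀ η ζ : H, Tendsto (fun N => ⟪K (Equiv.swap k N) η, ζ⟫_ℂ) atTop (𝓝 ⟪O η, ζ⟫_ℂ)) :
    P.comp O = O.comp P := by
  rcases lt_or_ge k n with hk | hk
  · exact (commute_of_lt hk hP hO).eq.symm
  · exact (commute_of_le hunit hcont hk hP hO).eq

/-- the projections `P_n` and `O_k` commute. -/
theorem statement6
    {H : Type*} [NormedAddCommGroup H] [InnerProductSpace ℂ H] [CompleteSpace H]
    (K : Equiv.Perm ℕ →* (H →L[ℂ] H))
    (hunit : ∀ g (η : H), ‖K g η‖ = ‖η‖)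
    (hcont : ∀ (η : H) (ε : ℝ), 0 < ε → ∃ k : ℕ, ∀ s ∈ stabSet k, ‖K s η - η‖ < ε)
    (n k : ℕ) (P O : H →L[ℂ] H)
    (hP : ∀ η ζ : H, Tendsto (fun m => ⟪K (sigmaPerm n m) η, ζ⟫_ℂ) atTop (𝓝 ⟪P η, ζ⟫_ℂ))
    (hO : ∀ η ζ : H, Tendsto (fun N => ⟪K (Equiv.swap k N) η, ζ⟫_ℂ) atTop (𝓝 ⟪O η, ζ⟫_ℂ))
    (hPsa : IsSelfAdjoint P) (hPidem : P.comp P = P)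
    (hOsa : IsSelfAdjoint O) (hOidem : O.comp O = O) :
    P.comp O = O.comp P :=
  statement6_general K hunit hcont n k P O hP hO
end

section
/- Let K be a continuous unitary representation of S̄∞ on H with depth n, and let σ_M^n = (n+1, n+M+1)···(n+M, n+2M). For M > m, σ_M^n can be written as s·σ_m^n·t with s, t ∈ S(n+m,∞); consequently ⟨(K(σ_M^n) − K(σ_m^n))η, ζ⟩ → 0 as m, M → ∞ for all η, ζ ∈ H. -/
open MeasureTheory Filter Topology
open scoped InnerProductSpace

/-!
`σ_M^n` sends `n+i ↦ n+M+i` for `i < m`, whereas `σ_m^n` sends `n+i ↦ n+m+i`.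
Letting `t ∈ S(n+m,∞)` exchange the adjacent blocks `[n+m, n+M)` and `[n+M, n+M+m)`, the
permutation `s = σ_M^n t⁻¹ σ_m^n` fixes `[0, n+m)`, and `σ_M^n = s σ_m^n t`.
For a unitary `K` this gives `⟪K(σ_M^n)η, ζ⟫ = ⟪K(σ_m^n)(K t η), K s⁻¹ ζ⟫`, which is close to
`⟪K(σ_m^n)η, ζ⟫` once `m` is so large that `S(m,∞)` moves neither `η` nor `ζ` much. Hence
`m ↦ ⟪K(σ_m^n)η, ζ⟫` is a Cauchy sequence.
-/

lemma stabSet_anti {k l : ℕ} (h : k ≤ l) : stabSet l ⊆ stabSet k :=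
  fun _ hs i hi => hs i (hi.trans_le h)

lemma inv_mem_stabSet {k : ℕ} {s : Equiv.Perm ℕ} (hs : s ∈ stabSet k) : s⁻¹ ∈ stabSet k :=
  fun i hi => by rw [Equiv.Perm.inv_eq_iff_eq, hs i hi]

def blockSwapFun (a p q x : ℕ) : ℕ :=
  if a ≤ x ∧ x < a + p then x + q else if a + p ≤ x ∧ x < a + p + q then x - p else x

lemma blockSwapFun_blockSwapFun (a p q x : ℕ) :
    blockSwapFun a q p (blockSwapFun a p q x) = x := by
  unfold blockSwapFun; split_ifs <;> omega

def blockSwap (a p q : ℕ) : Equiv.Perm ℕ where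
  toFun := blockSwapFun a p q
  invFun := blockSwapFun a q p
  left_inv := blockSwapFun_blockSwapFun a p q
  right_inv := blockSwapFun_blockSwapFun a q p

lemma blockSwap_apply (a p q x : ℕ) : blockSwap a p q x = blockSwapFun a p q x := rfl

lemma blockSwap_inv (a p q : ℕ) : (blockSwap a p q)⁻¹ = blockSwap a q p := rfl

lemma prod_map_range_swap_apply {a d m : ℕ} (hmd : m ≤ d) (x : ℕ) :
    ((List.range m).map fun j => Equiv.swap (a + j) (a + d + j)).prod x =
      if a ≤ x ∧ x < a + m then x + d else if a + d ≤ x ∧ x < a + d + m then x - d else x := by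
  induction m generalizing x with
  | zero =>
    simp only [List.range_zero, List.map_nil, List.prod_nil, Equiv.Perm.one_apply]
    split_ifs <;> omega
  | succ m ih =>
    rw [List.range_succ, List.map_append, List.prod_append, List.map_singleton,
      List.prod_singleton, Equiv.Perm.mul_apply, Equiv.swap_apply_def]
    split_ifs <;> rw [ih (by omega)] <;> split_ifs <;> omega

lemma sigmaPerm_eq_blockSwap (n m : ℕ) : sigmaPerm n m = blockSwap n m m :=
  Equiv.ext (prod_map_range_swap_apply le_rfl)

lemma exists_sigmaPerm_eq_mul_sigmaPerm_mul {n m M : ℕ} (h : m ≤ M) :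
    ∃ s ∈ stabSet (n + m), ∃ t ∈ stabSet (n + m), sigmaPerm n M = s * sigmaPerm n m * t := by
  set t := blockSwap (n + m) (M - m) m
  refine ⟨sigmaPerm n M * t⁻¹ * (sigmaPerm n m)⁻¹, ?_, t, ?_, by group⟩
  · intro x hx
    simp only [sigmaPerm_eq_blockSwap, t, blockSwap_inv, Equiv.Perm.mul_apply, blockSwap_apply]
    unfold blockSwapFun
    split_ifs <;> omega
  · intro x hx
    simp only [t, blockSwap_apply, blockSwapFun]
    split_ifs <;> omega

section Unitary

variable {H : Type*} [NormedAddCommGroup H] [InnerProductSpace ℂ H]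
  {G : Type*} [Group G] {K : G →* (H →L[ℂ] H)}

lemma inner_apply_apply_of_norm_eq (hunit : ∀ g (η : H), ‖K g η‖ = ‖η‖) (g : G) (x y : H) :
    ⟪K g x, K g y⟫_ℂ = ⟪x, y⟫_ℂ :=
  LinearIsometry.inner_map_map ⟨(K g).toLinearMap, hunit g⟩ x y

lemma inner_apply_mul_mul (hunit : ∀ g (η : H), ‖K g η‖ = ‖η‖) (s g t : G) (η ζ : H) :
    ⟪K (s * g * t) η, ζ⟫_ℂ = ⟪K g (K t η), K s⁻¹ ζ⟫_ℂ := by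
  have hζ : ζ = K s (K s⁻¹ ζ) := by
    rw [← mul_apply_eq_comp, ← map_mul, mul_inv_cancel, map_one,
      one_apply_eq_self]
  conv_lhs => rw [map_mul, map_mul, mul_apply_eq_comp,
    mul_apply_eq_comp, hζ]
  exact inner_apply_apply_of_norm_eq hunit s _ _

lemma norm_inner_apply_mul_mul_sub_le (hunit : ∀ g (η : H), ‖K g η‖ = ‖η‖)
    (s g t : G) (η ζ : H) :
    ‖⟪K (s * g * t) η, ζ⟫_ℂ - ⟪K g η, ζ⟫_ℂ‖ ≤ ‖K t η - η‖ * ‖ζ‖ + ‖η‖ * ‖K s⁻¹ ζ - ζ‖ := by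
  have hsplit : ⟪K (s * g * t) η, ζ⟫_ℂ - ⟪K g η, ζ⟫_ℂ
      = ⟪K g (K t η - η), K s⁻¹ ζ⟫_ℂ + ⟪K g η, K s⁻¹ ζ - ζ⟫_ℂ := by
    rw [inner_apply_mul_mul hunit, map_sub, inner_sub_left, inner_sub_right]
    ring
  calc ‖⟪K (s * g * t) η, ζ⟫_ℂ - ⟪K g η, ζ⟫_ℂ‖
      ≤ ‖K g (K t η - η)‖ * ‖K s⁻¹ ζ‖ + ‖K g η‖ * ‖K s⁻¹ ζ - ζ‖ := by
        rw [hsplit]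
        exact (norm_add_le _ _).trans
          (add_le_add (norm_inner_le_norm _ _) (norm_inner_le_norm _ _))
    _ = ‖K t η - η‖ * ‖ζ‖ + ‖η‖ * ‖K s⁻¹ ζ - ζ‖ := by rw [hunit, hunit, hunit]

end Unitary

lemma cauchySeq_inner_sigmaPerm {H : Type*} [NormedAddCommGroup H] [InnerProductSpace ℂ H]
    {K : Equiv.Perm ℕ →* (H →L[ℂ] H)} (hunit : ∀ g (η : H), ‖K g η‖ = ‖η‖)
    (hcont : ∀ (η : H) (ε : ℝ), 0 < ε → ∃ k : ℕ, ∀ s ∈ stabSet k, ‖K s η - η‖ < ε)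
    (n : ℕ) (η ζ : H) :
    CauchySeq fun m => ⟪K (sigmaPerm n m) η, ζ⟫_ℂ := by
  have heventually : ∀ (ξ : H) (δ : ℝ), 0 < δ →
      ∀ᶠ k in atTop, ∀ s ∈ stabSet k, ‖K s ξ - ξ‖ < δ := fun ξ δ hδ => by
    obtain ⟨k, hk⟩ := hcont ξ δ hδ
    exact eventually_atTop.2 ⟨k, fun l hl s hs => hk s (stabSet_anti hl hs)⟩
  rw [Metric.cauchySeq_iff']
  intro ε hε
  set δ := ε / (‖η‖ + ‖ζ‖ + 1)
  have hδ : 0 < δ := by positivity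
  obtain ⟨N, hNη, hNζ⟩ := ((heventually η δ hδ).and (heventually ζ δ hδ)).exists
  refine ⟨N, fun M hM => ?_⟩
  obtain ⟨s, hs, t, ht, hσ⟩ := exists_sigmaPerm_eq_mul_sigmaPerm_mul (n := n) hM
  have htη := hNη t (stabSet_anti le_add_self ht)
  have hsζ := hNζ s⁻¹ (stabSet_anti le_add_self (inv_mem_stabSet hs))
  calc dist ⟪K (sigmaPerm n M) η, ζ⟫_ℂ ⟪K (sigmaPerm n N) η, ζ⟫_ℂ
      ≤ ‖K t η - η‖ * ‖ζ‖ + ‖η‖ * ‖K s⁻¹ ζ - ζ‖ := by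
        rw [dist_eq_norm, hσ]
        exact norm_inner_apply_mul_mul_sub_le hunit _ _ _ η ζ
    _ ≤ δ * (‖η‖ + ‖ζ‖) := by
        nlinarith [norm_nonneg η, norm_nonneg ζ]
    _ < δ * (‖η‖ + ‖ζ‖ + 1) := mul_lt_mul_of_pos_left (lt_add_one _) hδ
    _ = ε := div_mul_cancel₀ ε (by positivity)

theorem statement19_general
    {H : Type*} [NormedAddCommGroup H] [InnerProductSpace ℂ H]
    (K : Equiv.Perm ℕ →* (H →L[ℂ] H))
    (hunit : ∀ g (η : H), ‖K g η‖ = ‖η‖)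
    (hcont : ∀ (η : H) (ε : ℝ), 0 < ε → ∃ k : ℕ, ∀ s ∈ stabSet k, ‖K s η - η‖ < ε)
    (n : ℕ) :
    (∀ m M : ℕ, m < M → ∃ s ∈ stabSet (n + m), ∃ t ∈ stabSet (n + m),
        sigmaPerm n M = s * sigmaPerm n m * t) ∧
      ∀ η ζ : H,
        Tendsto (fun p : ℕ × ℕ =>
            ⟪K (sigmaPerm n p.1) η - K (sigmaPerm n p.2) η, ζ⟫_ℂ)
          atTop (𝓝 0) := by
  refine ⟨fun m M h => exists_sigmaPerm_eq_mul_sigmaPerm_mul h.le, fun η ζ => ?_⟩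
  have hdist := cauchySeq_iff_tendsto_dist_atTop_0.1 (cauchySeq_inner_sigmaPerm hunit hcont n η ζ)
  simp only [dist_eq_norm, ← inner_sub_left] at hdist
  exact tendsto_zero_iff_norm_tendsto_zero.2 hdist

/-- for `M > m`, `σ_M^n` can be written as `s · σ_m^n · t` with
`s, t ∈ S(n+m,∞)`; consequently `⟪(K(σ_M^n) - K(σ_m^n))η, ζ⟫ → 0` as `m, M → ∞`. -/
theorem statement19
    {H : Type*} [NormedAddCommGroup H] [InnerProductSpace ℂ H] [CompleteSpace H]
    (K : Equiv.Perm ℕ →* (H →L[ℂ] H))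
    (hunit : ∀ g (η : H), ‖K g η‖ = ‖η‖)
    (hcont : ∀ (η : H) (ε : ℝ), 0 < ε → ∃ k : ℕ, ∀ s ∈ stabSet k, ‖K s η - η‖ < ε)
    (n : ℕ) :
    (∀ m M : ℕ, m < M → ∃ s ∈ stabSet (n + m), ∃ t ∈ stabSet (n + m),
        sigmaPerm n M = s * sigmaPerm n m * t) ∧
      ∀ η ζ : H,
        Tendsto (fun p : ℕ × ℕ =>
            ⟪K (sigmaPerm n p.1) η - K (sigmaPerm n p.2) η, ζ⟫_ℂ)
          atTop (𝓝 0) :=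
  statement19_general K hunit hcont n
end
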